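/- arXiv:2105.14320 — 3 statements merged into one kernel-verified Lean document; each statement's English description precedes it below -/
import Mathlib

section
/- For every real third-order tensor A of size n1 × n2 × n3 there exist tensors U of size n1 × n1 × n3 and V of size n2 × n2 × n3 and a tensor S of size n1 × n2 × n3 such that A = U * S * V^H, where U and V are orthogonal with respect to the t-product (U * U^H = U^H * U = I and V * V^H = V^H * V = I for the identity tensor I) and S is f-diagonal (every frontal slice S(:,:,k) is a diagonal matrix). (t-SVD existence, Theorem 1 of the paper.) -/
/-- Circular convolution of two tubes in `ℝ^{n3}`, indexed by `ZMod n3`. -/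
def circConv {n3 : ℕ} [NeZero n3] (a b : ZMod n3 → ℝ) : ZMod n3 → ℝ :=
  fun k => ∑ j : ZMod n3, a j * b (k - j)

/-- The t-product of third-order tensors: the `(i,j)`-th tube of `A * B` is the sum over `l`
of the circular convolutions of the `(i,l)`-th tube of `A` with the `(l,j)`-th tube of `B`. -/
def tProd {n1 n2 n4 n3 : ℕ} [NeZero n3]
    (A : Fin n1 → Fin n2 → ZMod n3 → ℝ) (B : Fin n2 → Fin n4 → ZMod n3 → ℝ) :
    Fin n1 → Fin n4 → ZMod n3 → ℝ :=
  fun i j k => ∑ l : Fin n2, circConv (A i l) (B l j) k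

/-- The conjugate transpose of a real third-order tensor: the first frontal slice is
transposed, and the `k`-th slice (for `k ≠ 0` in `ZMod n3`) is the transpose of the
`(n3 + 2 - k)`-th slice, i.e. of the `(-k)`-th slice in `ZMod n3` indexing. -/
def conjT {n1 n2 n3 : ℕ} [NeZero n3] (A : Fin n1 → Fin n2 → ZMod n3 → ℝ) :
    Fin n2 → Fin n1 → ZMod n3 → ℝ :=
  fun i j k => A j i (-k)

/-- The identity tensor: the first frontal slice is the identity matrix and all other
frontal slices are zero. -/
def idT (n n3 : ℕ) [NeZero n3] : Fin n → Fin n → ZMod n3 → ℝ :=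
  fun i j k => if i = j ∧ k = 0 then 1 else 0

/-- A tensor is orthogonal w.r.t. the t-product if `Q * Qᴴ = Qᴴ * Q = I`. -/
def orthT {n n3 : ℕ} [NeZero n3] (Q : Fin n → Fin n → ZMod n3 → ℝ) : Prop :=
  tProd Q (conjT Q) = idT n n3 ∧ tProd (conjT Q) Q = idT n n3

/-- A tensor is f-diagonal if every frontal slice is a diagonal matrix. -/
def fDiag {n1 n2 n3 : ℕ} [NeZero n3] (S : Fin n1 → Fin n2 → ZMod n3 → ℝ) : Prop :=
  ∀ (k : ZMod n3) (i : Fin n1) (j : Fin n2), (i : ℕ) ≠ (j : ℕ) → S i j k = 0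

/-!
The discrete Fourier transform along the tubes turns the t-product into the product of the
frequency slices `freqSlice X k` (convolution theorem) and `conjT` into their conjugate
transpose, so it suffices to take a matrix SVD of every frequency slice of `A`. The frequency
slices of a real tensor satisfy `freqSlice X (-k) = conj (freqSlice X k)`, and every family with
this symmetry comes from a real tensor. So the SVDs are chosen with the same symmetry, which is
possible because at a self-conjugate frequency `k = -k` the slice is a real matrix and has a
real SVD.
-/

open Module InnerProductSpace Matrix ZMod ComplexConjugate

namespace LinearMap

variable {𝕜 E F : Type*} [RCLike 𝕜] [NormedAddCommGroup E] [InnerProductSpace 𝕜 E]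
  [FiniteDimensional 𝕜 E] [NormedAddCommGroup F] [InnerProductSpace 𝕜 F] [FiniteDimensional 𝕜 F]

theorem exists_orthonormalBasis_inner_apply_eq_zero {m n : ℕ} (hn : finrank 𝕜 E = n)
    (hm : finrank 𝕜 F = m) (T : E →ₗ[𝕜] F) :
    ∃ (e : OrthonormalBasis (Fin n) 𝕜 E) (f : OrthonormalBasis (Fin m) 𝕜 F),
      ∀ (i : Fin m) (j : Fin n), (i : ℕ) ≠ j → ⟪f i, T (e j)⟫_𝕜 = 0 := by
  set hT := T.isSymmetric_adjoint_comp_self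
  set e := hT.eigenvectorBasis hn
  have inner_apply_apply (i j : Fin n) :
      ⟪T (e i), T (e j)⟫_𝕜 = if i = j then (hT.eigenvalues hn j : 𝕜) else 0 := by
    rw [← adjoint_inner_right, ← comp_apply, hT.apply_eigenvectorBasis, inner_smul_right,
      e.inner_eq_ite]
    split_ifs <;> simp
  -- `e` lists the eigenvalues of `T† T` in decreasing order, so the indices `j` with
  -- `T (e j) ≠ 0` form an initial segment of length `rank T ≤ m`.
  have lt_of_apply_ne_zero (j : Fin n) (hj : T (e j) ≠ 0) : (j : ℕ) < m := by
    have hpos : 0 < hT.eigenvalues hn j := by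
      refine lt_of_le_of_ne (T.isPositive_adjoint_comp_self.nonneg_eigenvalues hn j) fun h => hj ?_
      rw [← inner_self_eq_zero (𝕜 := 𝕜), inner_apply_apply, if_pos rfl, ← h, RCLike.ofReal_zero]
    have := (T.singularValues_pos_iff_lt_finrank_range (n := j)).mp
      (by rw [T.singularValues_fin hn j]; exact Real.sqrt_pos.mpr hpos)
    exact this.trans_le (hm ▸ Submodule.finrank_le _)
  set g : Fin m → F := fun i => if h : (i : ℕ) < n then T (e ⟨i, h⟩) else 0
  have hg : Pairwise fun i j => ⟪g i, g j⟫_𝕜 = 0 := by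
    intro i j hij
    simp only [g]
    split_ifs
    · rw [inner_apply_apply, if_neg (fun h => hij (Fin.ext (Fin.mk.inj h)))]
    all_goals simp
  set f := gramSchmidtOrthonormalBasis (hm.trans (Fintype.card_fin m).symm) g
  refine ⟨e, f, fun i j hij => ?_⟩
  by_cases hj : T (e j) = 0
  · rw [hj, inner_zero_right]
  set j' : Fin m := ⟨j, lt_of_apply_ne_zero j hj⟩
  have hgj : g j' = T (e j) := dif_pos j.isLt
  have hfj : T (e j) = (‖T (e j)‖ : 𝕜) • f j' := by
    rw [gramSchmidtOrthonormalBasis_apply_of_orthogonal _ hg (hgj ▸ hj), hgj, smul_smul,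
      ← RCLike.ofReal_inv, ← RCLike.ofReal_mul, mul_inv_cancel₀ (norm_ne_zero_iff.mpr hj),
      RCLike.ofReal_one, one_smul]
  rw [hfj, inner_smul_right, f.inner_eq_zero (fun h => hij (by rw [h])), mul_zero]

end LinearMap

namespace Matrix

variable {m n : ℕ}

def IsRectDiag {α : Type*} [Zero α] (D : Matrix (Fin m) (Fin n) α) : Prop :=
  ∀ (i : Fin m) (j : Fin n), (i : ℕ) ≠ j → D i j = 0

theorem IsRectDiag.map {α β : Type*} [Zero α] [Zero β] {D : Matrix (Fin m) (Fin n) α}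
    (hD : D.IsRectDiag) {f : α → β} (hf : f 0 = 0) : (D.map f).IsRectDiag := fun i j hij => by
  rw [map_apply, hD i j hij, hf]

/-- `U` and `V` are the unitary factors of a singular value decomposition `M = U * S * Vᴴ`,
whose diagonal factor is then `S = Uᴴ * M * V`. -/
structure IsSVD {α : Type*} [CommRing α] [StarRing α] (M : Matrix (Fin m) (Fin n) α)
    (U : Matrix (Fin m) (Fin m) α) (V : Matrix (Fin n) (Fin n) α) : Prop where
  left_mem_unitaryGroup : U ∈ unitaryGroup (Fin m) α
  right_mem_unitaryGroup : V ∈ unitaryGroup (Fin n) α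
  isRectDiag : (Uᴴ * M * V).IsRectDiag

section IsSVD

variable {α β : Type*} [CommRing α] [StarRing α] [CommRing β] [StarRing β]
  {M : Matrix (Fin m) (Fin n) α} {U : Matrix (Fin m) (Fin m) α} {V : Matrix (Fin n) (Fin n) α}

theorem IsSVD.eq_mul_mul (h : M.IsSVD U V) : M = U * (Uᴴ * M * V) * Vᴴ := by
  have hU : U * Uᴴ = 1 := mem_unitaryGroup_iff.mp h.left_mem_unitaryGroup
  have hV : V * Vᴴ = 1 := mem_unitaryGroup_iff.mp h.right_mem_unitaryGroup
  simp only [← Matrix.mul_assoc, hU, Matrix.one_mul]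
  rw [Matrix.mul_assoc, hV, Matrix.mul_one]

theorem map_mem_unitaryGroup {k : ℕ} {W : Matrix (Fin k) (Fin k) α}
    (hW : W ∈ unitaryGroup (Fin k) α) {f : α →+* β} (hf : ∀ x, f (star x) = star (f x)) :
    W.map f ∈ unitaryGroup (Fin k) β := by
  rw [mem_unitaryGroup_iff, star_eq_conjTranspose, ← conjTranspose_map f hf, ← Matrix.map_mul,
    ← star_eq_conjTranspose, mem_unitaryGroup_iff.mp hW, Matrix.map_one f f.map_zero f.map_one]

theorem IsSVD.map (h : M.IsSVD U V) {f : α →+* β} (hf : ∀ x, f (star x) = star (f x)) :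
    (M.map f).IsSVD (U.map f) (V.map f) where
  left_mem_unitaryGroup := map_mem_unitaryGroup h.left_mem_unitaryGroup hf
  right_mem_unitaryGroup := map_mem_unitaryGroup h.right_mem_unitaryGroup hf
  isRectDiag := by
    rw [← conjTranspose_map f hf, ← Matrix.map_mul, ← Matrix.map_mul]
    exact h.isRectDiag.map f.map_zero

end IsSVD

theorem exists_isSVD {𝕜 : Type*} [RCLike 𝕜] (M : Matrix (Fin m) (Fin n) 𝕜) :
    ∃ U V, M.IsSVD U V := by
  obtain ⟨e, f, hef⟩ := LinearMap.exists_orthonormalBasis_inner_apply_eq_zero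
    (E := EuclideanSpace 𝕜 (Fin n)) (F := EuclideanSpace 𝕜 (Fin m))
    finrank_euclideanSpace_fin finrank_euclideanSpace_fin (toEuclideanLin M)
  refine ⟨(EuclideanSpace.basisFun (Fin m) 𝕜).toBasis.toMatrix f,
    (EuclideanSpace.basisFun (Fin n) 𝕜).toBasis.toMatrix e,
    ⟨OrthonormalBasis.toMatrix_orthonormalBasis_mem_unitary _ _,
      OrthonormalBasis.toMatrix_orthonormalBasis_mem_unitary _ _, fun i j hij => ?_⟩⟩
  rw [← hef i j hij]
  simp only [mul_apply, conjTranspose_apply, Basis.toMatrix_apply,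
    OrthonormalBasis.coe_toBasis_repr_apply, EuclideanSpace.basisFun_repr, RCLike.star_def,
    mul_comm, Finset.mul_sum, mul_left_comm, PiLp.inner_apply, ofLp_toLpLin, toLin'_apply, mulVec,
    dotProduct, RCLike.inner_apply, mul_assoc]
  exact Finset.sum_comm

theorem exists_isSVD_of_map_conj_eq (M : Matrix (Fin m) (Fin n) ℂ) (hM : M.map conj = M) :
    ∃ U V, M.IsSVD U V ∧ U.map conj = U ∧ V.map conj = V := by
  have hre : (M.map Complex.re).map Complex.ofRealHom = M := by
    ext i j
    exact Complex.conj_eq_iff_re.mp (congrFun (congrFun hM i) j)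
  have conj_map_ofReal {k l : ℕ} (X : Matrix (Fin k) (Fin l) ℝ) :
      (X.map Complex.ofRealHom).map conj = X.map Complex.ofRealHom := by
    ext i j
    exact Complex.conj_ofReal _
  obtain ⟨U, V, h⟩ := exists_isSVD (M.map Complex.re)
  exact ⟨U.map Complex.ofRealHom, V.map Complex.ofRealHom,
    hre ▸ h.map fun x => (Complex.conj_ofReal x).symm, conj_map_ofReal U, conj_map_ofReal V⟩

end Matrix

theorem exists_forall_and_apply_neg_eq {G X : Type*} [InvolutiveNeg G] {c : X → X}
    (hc : Function.Involutive c) {P : G → X → Prop} (hP : ∀ j x, P j x → P (-j) (c x))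
    (hex : ∀ j, ∃ x, P j x) (hfix : ∀ j, -j = j → ∃ x, P j x ∧ c x = x) :
    ∃ g : G → X, ∀ j, P j (g j) ∧ g (-j) = c (g j) := by
  have hx (j : G) : ∃ x, P j x ∧ (-j = j → c x = x) := by
    by_cases h : -j = j
    · obtain ⟨x, hPx, hcx⟩ := hfix j h
      exact ⟨x, hPx, fun _ => hcx⟩
    · obtain ⟨x, hPx⟩ := hex j
      exact ⟨x, hPx, fun h' => absurd h' h⟩
  choose x hxP hxc using hx
  -- Any linear order on `G` picks one representative of each orbit `{j, -j}`.
  let : LinearOrder G := IsWellOrder.linearOrder WellOrderingRel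
  refine ⟨fun j => if j ≤ -j then x j else c (x (-j)), fun j => ⟨?_, ?_⟩⟩ <;> dsimp only
  · split_ifs
    · exact hxP j
    · simpa using hP _ _ (hxP (-j))
  · rcases lt_trichotomy j (-j) with h | h | h
    · simp [h.le, h.not_ge]
    · simp only [← h, le_refl, if_true, hxc j h.symm]
    · simp [h.le, h.not_ge, hc (x (-j))]

namespace ZMod

variable {N : ℕ} [NeZero N]

theorem conj_dft (Φ : ZMod N → ℂ) (k : ZMod N) : conj (𝓕 Φ k) = 𝓕 (conj ∘ Φ) (-k) := by
  simp only [dft_apply, smul_eq_mul, map_sum, map_mul, Function.comp_apply]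
  refine Finset.sum_congr rfl fun j _ => ?_
  rw [stdAddChar_apply, ← Circle.coe_inv_eq_conj, ← AddChar.map_neg_eq_inv, ← stdAddChar_apply,
    neg_neg, mul_neg, neg_neg]

theorem dft_convolution (Φ Ψ : ZMod N → ℂ) (k : ZMod N) :
    𝓕 (fun x => ∑ y, Φ y * Ψ (x - y)) k = 𝓕 Φ k * 𝓕 Ψ k := by
  simp only [dft_apply, smul_eq_mul]
  rw [Finset.sum_mul_sum]
  simp only [Finset.mul_sum]
  rw [Finset.sum_comm]
  refine Finset.sum_congr rfl fun y _ => ?_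
  refine (Fintype.sum_equiv (Equiv.addLeft y) _ _ fun z => ?_).symm
  rw [Equiv.coe_addLeft, add_sub_cancel_left, show -((y + z) * k) = -(y * k) + -(z * k) by ring,
    AddChar.map_add_eq_mul]
  ring

end ZMod

section TubeDFT

variable {N : ℕ} [NeZero N]

noncomputable def tubeDFT (a : ZMod N → ℝ) : ZMod N → ℂ :=
  𝓕 fun k => (a k : ℂ)

theorem tubeDFT_injective : Function.Injective (tubeDFT (N := N)) := fun _ _ h =>
  funext fun k => Complex.ofReal_injective (congrFun (dft.injective h) k)

theorem tubeDFT_circConv (a b : ZMod N → ℝ) (k : ZMod N) :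
    tubeDFT (circConv a b) k = tubeDFT a k * tubeDFT b k := by
  rw [tubeDFT, tubeDFT, tubeDFT, ← dft_convolution]
  simp only [circConv, Complex.ofReal_sum, Complex.ofReal_mul]

theorem tubeDFT_neg (a : ZMod N → ℝ) (k : ZMod N) : tubeDFT a (-k) = conj (tubeDFT a k) := by
  simp [tubeDFT, conj_dft, Function.comp_def]

theorem tubeDFT_comp_neg (a : ZMod N → ℝ) (k : ZMod N) :
    tubeDFT (fun j => a (-j)) k = conj (tubeDFT a k) := by
  rw [← tubeDFT_neg]
  exact congrFun (dft_comp_neg fun j => (a j : ℂ)) k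

@[simp]
theorem tubeDFT_zero : tubeDFT (0 : ZMod N → ℝ) = 0 := by
  simp [tubeDFT, ← Pi.zero_def]

theorem exists_tubeDFT_eq (Ψ : ZMod N → ℂ) (hΨ : ∀ k, Ψ (-k) = conj (Ψ k)) :
    ∃ a, tubeDFT a = Ψ := by
  set Φ := 𝓕⁻ Ψ
  have hreal : conj ∘ Φ = Φ := dft.injective <| funext fun k => calc
    𝓕 (conj ∘ Φ) k = conj (𝓕 Φ (-k)) := by rw [conj_dft, neg_neg]
    _ = 𝓕 Φ k := by rw [LinearEquiv.apply_symm_apply, hΨ, Complex.conj_conj]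
  refine ⟨fun k => (Φ k).re, ?_⟩
  rw [tubeDFT]
  convert dft.apply_symm_apply Ψ with k
  exact Complex.conj_eq_iff_re.mp (congrFun hreal k)

end TubeDFT

section FreqSlice

variable {N : ℕ} [NeZero N] {n1 n2 : ℕ}

noncomputable def freqSlice (X : Fin n1 → Fin n2 → ZMod N → ℝ) (k : ZMod N) :
    Matrix (Fin n1) (Fin n2) ℂ :=
  Matrix.of fun i j => tubeDFT (X i j) k

theorem freqSlice_injective :
    Function.Injective (freqSlice : (Fin n1 → Fin n2 → ZMod N → ℝ) → _) := fun _ _ h =>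
  funext fun i => funext fun j =>
    tubeDFT_injective (funext fun k => congrFun (congrFun (congrFun h k) i) j)

theorem freqSlice_neg (X : Fin n1 → Fin n2 → ZMod N → ℝ) (k : ZMod N) :
    freqSlice X (-k) = (freqSlice X k).map conj := by
  ext i j
  exact tubeDFT_neg (X i j) k

theorem freqSlice_tProd {n3 : ℕ} (X : Fin n1 → Fin n2 → ZMod N → ℝ)
    (Y : Fin n2 → Fin n3 → ZMod N → ℝ) (k : ZMod N) :
    freqSlice (tProd X Y) k = freqSlice X k * freqSlice Y k := by
  ext i j
  simp only [Matrix.mul_apply, freqSlice, Matrix.of_apply, ← tubeDFT_circConv]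
  simp only [tubeDFT, tProd, Complex.ofReal_sum]
  rw [← Finset.sum_fn, map_sum, Finset.sum_apply]

theorem freqSlice_conjT (X : Fin n1 → Fin n2 → ZMod N → ℝ) (k : ZMod N) :
    freqSlice (conjT X) k = (freqSlice X k)ᴴ := by
  ext i j
  exact tubeDFT_comp_neg (X j i) k

theorem freqSlice_idT (k : ZMod N) : freqSlice (idT n1 N) k = 1 := by
  ext i j
  by_cases hij : i = j <;>
    simp [freqSlice, idT, tubeDFT, dft_apply, Matrix.one_apply, hij, apply_ite]

theorem exists_freqSlice_eq (F : ZMod N → Matrix (Fin n1) (Fin n2) ℂ)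
    (hF : ∀ k, F (-k) = (F k).map conj) : ∃ X, freqSlice X = F := by
  choose X hX using fun i j => exists_tubeDFT_eq (fun k => F k i j)
    fun k => congrFun (congrFun (hF k) i) j
  exact ⟨X, funext fun k => Matrix.ext fun i j => congrFun (hX i j) k⟩

theorem orthT_of_freqSlice_mem_unitaryGroup (Q : Fin n1 → Fin n1 → ZMod N → ℝ)
    (hQ : ∀ k, freqSlice Q k ∈ unitaryGroup (Fin n1) ℂ) : orthT Q := by
  constructor <;> refine freqSlice_injective (funext fun k => ?_) <;>
    rw [freqSlice_tProd, freqSlice_conjT, freqSlice_idT, ← star_eq_conjTranspose]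
  exacts [mem_unitaryGroup_iff.mp (hQ k), mem_unitaryGroup_iff'.mp (hQ k)]

theorem fDiag_of_isRectDiag_freqSlice (S : Fin n1 → Fin n2 → ZMod N → ℝ)
    (hS : ∀ k, (freqSlice S k).IsRectDiag) : fDiag S := fun k i j hij => by
  have : S i j = 0 := tubeDFT_injective <| funext fun k' => by
    rw [tubeDFT_zero]
    exact hS k' i j hij
  rw [this, Pi.zero_apply]

theorem exists_isSVD_freqSlice (A : Fin n1 → Fin n2 → ZMod N → ℝ) :
    ∃ (U : Fin n1 → Fin n1 → ZMod N → ℝ) (V : Fin n2 → Fin n2 → ZMod N → ℝ),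
      ∀ k, (freqSlice A k).IsSVD (freqSlice U k) (freqSlice V k) := by
  have conj_involutive {k l : ℕ} :
      Function.Involutive fun X : Matrix (Fin k) (Fin l) ℂ => X.map conj := fun X => by
    ext; simp
  obtain ⟨UV, hUV⟩ := exists_forall_and_apply_neg_eq
    (conj_involutive.prodMap conj_involutive) (P := fun k UV => (freqSlice A k).IsSVD UV.1 UV.2)
    (fun k _ h => freqSlice_neg A k ▸ h.map fun _ => rfl)
    (fun k => let ⟨U, V, h⟩ := (freqSlice A k).exists_isSVD; ⟨(U, V), h⟩)
    (fun k hk => by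
      obtain ⟨U, V, h, hU, hV⟩ := (freqSlice A k).exists_isSVD_of_map_conj_eq
        (by rw [← freqSlice_neg, hk])
      exact ⟨(U, V), h, Prod.ext hU hV⟩)
  obtain ⟨U, hU⟩ := exists_freqSlice_eq (fun k => (UV k).1) fun k => congrArg Prod.fst (hUV k).2
  obtain ⟨V, hV⟩ := exists_freqSlice_eq (fun k => (UV k).2) fun k => congrArg Prod.snd (hUV k).2
  exact ⟨U, V, fun k => hU ▸ hV ▸ (hUV k).1⟩

end FreqSlice

/-- t-SVD existence: every real third-order tensor `A` of size `n1 × n2 × n3` factors as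
`A = U * S * Vᴴ` with `U`, `V` orthogonal w.r.t. the t-product and `S` f-diagonal. -/
theorem tSVD_exists {n1 n2 n3 : ℕ} [NeZero n3] (A : Fin n1 → Fin n2 → ZMod n3 → ℝ) :
    ∃ (U : Fin n1 → Fin n1 → ZMod n3 → ℝ) (S : Fin n1 → Fin n2 → ZMod n3 → ℝ)
      (V : Fin n2 → Fin n2 → ZMod n3 → ℝ),
      orthT U ∧ orthT V ∧ fDiag S ∧ A = tProd (tProd U S) (conjT V) := by
  obtain ⟨U, V, hsvd⟩ := exists_isSVD_freqSlice A
  have hS (k : ZMod n3) : freqSlice (tProd (tProd (conjT U) A) V) k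
      = (freqSlice U k)ᴴ * freqSlice A k * freqSlice V k := by
    rw [freqSlice_tProd, freqSlice_tProd, freqSlice_conjT]
  refine ⟨U, tProd (tProd (conjT U) A) V, V,
    orthT_of_freqSlice_mem_unitaryGroup U fun k => (hsvd k).left_mem_unitaryGroup,
    orthT_of_freqSlice_mem_unitaryGroup V fun k => (hsvd k).right_mem_unitaryGroup,
    fDiag_of_isRectDiag_freqSlice _ fun k => hS k ▸ (hsvd k).isRectDiag,
    freqSlice_injective (funext fun k => ?_)⟩
  rw [freqSlice_tProd, freqSlice_tProd, freqSlice_conjT, hS]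
  exact (hsvd k).eq_mul_mul
end

section
/- The discrete Fourier transform along the third mode converts the t-product into slice-wise matrix products: for tensors A ∈ ℝ^{n1×n2×n3} and B ∈ ℝ^{n2×n4×n3}, and for every k ∈ ZMod n3, the k-th frontal slice of the mode-3 DFT of A * B equals the matrix product of the k-th frontal slice of the mode-3 DFT of A with the k-th frontal slice of the mode-3 DFT of B; here the mode-3 DFT of a tensor X is the complex tensor whose (i,j,k)-th entry is Σ_{t ∈ ZMod n3} X(i,j,t)·ω^{kt} with ω = exp(−2πi/n3). -/
/-- The mode-3 discrete Fourier transform of a real third-order tensor: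
`(dft3 X) i j k = ∑ t, X i j t * exp(-2πi·k·t/n3)`. -/
noncomputable def dft3 {n1 n2 n3 : ℕ} [NeZero n3] (X : Fin n1 → Fin n2 → ZMod n3 → ℝ) :
    Fin n1 → Fin n2 → ZMod n3 → ℂ :=
  fun i j k => ∑ t : ZMod n3,
    (X i j t : ℂ) * Complex.exp (-2 * Real.pi * Complex.I * (k.val * t.val : ℕ) / n3)

/-
For fixed `k`, the kernel `t ↦ exp(-2πi·k·t/n3)` of the mode-3 DFT is an additive character of
`ZMod n3`. Against any additive character `ψ` of a finite abelian group, the transform of a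
convolution factors, `∑ₜ (a ⋆ b)(t) ψ(t) = (∑ₜ a(t) ψ(t)) (∑ₜ b(t) ψ(t))`, because
`ψ(t) = ψ(j) ψ(t - j)`. Each tube of a t-product is a sum of convolutions, and the transform
is additive.
-/

open Finset

theorem AddChar.sum_convolution_mul {G R : Type*} [AddCommGroup G] [Fintype G] [CommRing R]
    (ψ : AddChar G R) (a b : G → R) :
    ∑ t, (∑ j, a j * b (t - j)) * ψ t = (∑ t, a t * ψ t) * ∑ t, b t * ψ t := by
  have hsplit : ∀ t j, ψ t = ψ j * ψ (t - j) := fun t j => by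
    rw [← AddChar.map_add_eq_mul, add_sub_cancel]
  calc ∑ t, (∑ j, a j * b (t - j)) * ψ t
      = ∑ j, a j * ψ j * ∑ t, b (t - j) * ψ (t - j) := by
        simp only [sum_mul, mul_sum]
        rw [sum_comm]
        refine sum_congr rfl fun j _ => sum_congr rfl fun t _ => ?_
        rw [hsplit t j]; ring
    _ = (∑ t, a t * ψ t) * ∑ t, b t * ψ t := by
        rw [sum_mul]
        exact sum_congr rfl fun j _ => congrArg _ ((Equiv.subRight j).sum_comp fun s => b s * ψ s)

lemma dft3_kernel_eq_mulShift {n : ℕ} [NeZero n] (k t : ZMod n) :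
    Complex.exp (-2 * Real.pi * Complex.I * (k.val * t.val : ℕ) / n) =
      ZMod.stdAddChar.mulShift (-k) t := by
  have hcast : ((-(k.val * t.val : ℕ) : ℤ) : ZMod n) = -k * t := by
    push_cast; simp
  rw [AddChar.mulShift_apply, ← hcast, ZMod.stdAddChar_coe]
  congr 1; push_cast; ring

lemma dft3_apply_eq_sum_mulShift {n1 n2 n : ℕ} [NeZero n] (X : Fin n1 → Fin n2 → ZMod n → ℝ)
    (i : Fin n1) (j : Fin n2) (k : ZMod n) :
    dft3 X i j k = ∑ t, (X i j t : ℂ) * ZMod.stdAddChar.mulShift (-k) t := by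
  simp only [dft3, dft3_kernel_eq_mulShift]

/-- The mode-3 DFT converts the t-product into slice-wise matrix products: for every
slice index `k`, the `k`-th frontal slice of `dft3 (A * B)` is the matrix product of the
`k`-th frontal slices of `dft3 A` and `dft3 B`. -/
theorem dft3_tProd {n1 n2 n4 n3 : ℕ} [NeZero n3]
    (A : Fin n1 → Fin n2 → ZMod n3 → ℝ) (B : Fin n2 → Fin n4 → ZMod n3 → ℝ) :
    ∀ (k : ZMod n3) (i : Fin n1) (j : Fin n4),
      dft3 (tProd A B) i j k = ∑ l : Fin n2, dft3 A i l k * dft3 B l j k := by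
  intro k i j
  simp only [dft3_apply_eq_sum_mulShift, tProd, circConv, ← AddChar.sum_convolution_mul]
  push_cast
  simp only [sum_mul]
  exact sum_comm
end

section
/- Subgradient of the nuclear norm: let X ∈ ℝ^{m×n} have singular value decomposition X = U Σ Vᵀ with U ∈ ℝ^{m×m}, V ∈ ℝ^{n×n} orthogonal and Σ diagonal with nonnegative diagonal, let r be the number of nonzero singular values of X, and let Ũ ∈ ℝ^{m×r} and Ṽ ∈ ℝ^{n×r} be the matrices formed by the first r columns of U and V (those corresponding to the nonzero singular values). Then Ũ Ṽᵀ is a subgradient of the nuclear norm at X, i.e., for every Y ∈ ℝ^{m×n}, ‖Y‖_* ≥ ‖X‖_* + ⟨Ũ Ṽᵀ, Y − X⟩, where ⟨A,B⟩ = trace(AᵀB). -/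
/-!
The positive semidefinite square root is unique, so `‖U S Vᵀ‖_* = trace √(V SᵀS Vᵀ) = ∑ S j j`;
and `⟨G, U S Vᵀ⟩ = ∑_{l < r} S l l` for `G = Ũ Ṽᵀ`, since `Ũᵀ U` and `Vᵀ Ṽ` pick out the leading
`r × r` block of `S`. These agree because the other diagonal entries vanish, so `⟨G, X⟩ = ‖X‖_*`.
On the other hand `G` is a contraction, `pᵀ G q ≤ |p| |q|`, because `Ũᵀ` and `Ṽᵀ` only drop
coordinates after an orthogonal change of basis. Evaluating the trace in an orthonormal eigenbasis
`(w_k)` of `Yᵀ Y` gives `⟨G, Y⟩ = ∑ (Y w_k)ᵀ G w_k ≤ ∑ |Y w_k| = ‖Y‖_*`.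
-/

open Matrix

/-- The nuclear norm of a real matrix: the trace of the positive semidefinite square root
of `Xᵀ X` (i.e. the sum of the singular values of `X`). -/
noncomputable def nuclearNorm {m n : ℕ} (X : Matrix (Fin m) (Fin n) ℝ) : ℝ :=
  ((((Matrix.posSemidef_conjTranspose_mul_self X).1.eigenvectorUnitary : Matrix (Fin n) (Fin n) ℝ) *
      diagonal ((↑) ∘ (fun x => √x) ∘ (Matrix.posSemidef_conjTranspose_mul_self X).1.eigenvalues) *
      (star ((Matrix.posSemidef_conjTranspose_mul_self X).1.eigenvectorUnitary :
        Matrix (Fin n) (Fin n) ℝ))) : Matrix (Fin n) (Fin n) ℝ).trace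

section NuclearNorm

open scoped MatrixOrder

lemma nuclearNorm_eq_sum_sqrt_eigenvalues {m n : ℕ} (X : Matrix (Fin m) (Fin n) ℝ) :
    nuclearNorm X = ∑ j, √((posSemidef_conjTranspose_mul_self X).1.eigenvalues j) := by
  rw [nuclearNorm, trace_mul_cycle, Unitary.coe_star_mul_self, one_mul, trace_diagonal]
  rfl

lemma nuclearNorm_eq_trace_sqrt {m n : ℕ} (X : Matrix (Fin m) (Fin n) ℝ) :
    nuclearNorm X = trace (CFC.sqrt (Xᵀ * X)) := by
  have hX := posSemidef_conjTranspose_mul_self X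
  rw [conjTranspose_eq_transpose_of_trivial] at hX
  rw [CFC.sqrt_eq_real_sqrt _ hX.nonneg, cfcₙ_eq_cfc, hX.1.cfc_eq, IsHermitian.cfc,
    Unitary.conjStarAlgAut_apply, nuclearNorm]
  rfl

lemma sqrt_mul_diagonal_sq_mul_transpose {n : Type*} [Fintype n] [DecidableEq n]
    (W : Matrix n n ℝ) (hW : Wᵀ * W = 1) (d : n → ℝ) (hd : 0 ≤ d) :
    CFC.sqrt (W * diagonal (d ^ 2) * Wᵀ) = W * diagonal d * Wᵀ := by
  have hnonneg : 0 ≤ W * diagonal d * Wᵀ := by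
    simpa using ((posSemidef_diagonal_iff.mpr hd).mul_mul_conjTranspose_same W).nonneg
  refine CFC.sqrt_unique ?_ hnonneg
  calc W * diagonal d * Wᵀ * (W * diagonal d * Wᵀ)
      = W * diagonal d * (Wᵀ * W) * diagonal d * Wᵀ := by simp only [Matrix.mul_assoc]
    _ = W * diagonal (d ^ 2) * Wᵀ := by
      rw [hW, Matrix.mul_one, Matrix.mul_assoc W, diagonal_mul_diagonal, sq]
      rfl

lemma nuclearNorm_eq_sum_of_transpose_mul_self_eq {m n : ℕ} {X : Matrix (Fin m) (Fin n) ℝ}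
    (W : Matrix (Fin n) (Fin n) ℝ) (hW : Wᵀ * W = 1) (d : Fin n → ℝ) (hd : 0 ≤ d)
    (hX : Xᵀ * X = W * diagonal (d ^ 2) * Wᵀ) :
    nuclearNorm X = ∑ j, d j := by
  rw [nuclearNorm_eq_trace_sqrt, hX, sqrt_mul_diagonal_sq_mul_transpose W hW d hd,
    trace_mul_cycle, hW, Matrix.one_mul, trace_diagonal]

lemma trace_transpose_mul_le_nuclearNorm {m n : ℕ} (G Y : Matrix (Fin m) (Fin n) ℝ)
    (hG : ∀ p q, p ⬝ᵥ G *ᵥ q ≤ √(p ⬝ᵥ p) * √(q ⬝ᵥ q)) :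
    trace (Gᵀ * Y) ≤ nuclearNorm Y := by
  have hY := (posSemidef_conjTranspose_mul_self Y).1
  set E : Matrix (Fin n) (Fin n) ℝ := (hY.eigenvectorUnitary : Matrix (Fin n) (Fin n) ℝ)
  have hstar : star E = Eᵀ := conjTranspose_eq_transpose_of_trivial E
  have hE : Eᵀ * E = 1 := hstar ▸ Unitary.coe_star_mul_self hY.eigenvectorUnitary
  have hE' : E * Eᵀ = 1 := hstar ▸ Unitary.coe_mul_star_self hY.eigenvectorUnitary
  have hdiag : (Y * E)ᵀ * (Y * E) = diagonal hY.eigenvalues := by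
    have h : star E * (Yᴴ * Y) * E = diagonal (RCLike.ofReal ∘ hY.eigenvalues) :=
      hY.conjStarAlgAut_star_eigenvectorUnitary
    rw [hstar] at h
    simpa [Matrix.mul_assoc] using h
  have htrace : trace (Gᵀ * Y) = ∑ k, (Y * E)ᵀ k ⬝ᵥ G *ᵥ Eᵀ k :=
    calc trace (Gᵀ * Y) = trace ((G * E)ᵀ * (Y * E)) := by
          rw [transpose_mul, Matrix.mul_assoc, trace_mul_comm Eᵀ, Matrix.mul_assoc,
            Matrix.mul_assoc, hE', Matrix.mul_one]
      _ = _ := Finset.sum_congr rfl fun k _ => by rw [dotProduct_comm]; rfl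
  have hcol : ∀ {ι : Type} [Fintype ι] (A : Matrix ι (Fin n) ℝ) (k : Fin n),
      Aᵀ k ⬝ᵥ Aᵀ k = (Aᵀ * A) k k := fun _ _ => rfl
  rw [nuclearNorm_eq_sum_sqrt_eigenvalues, htrace]
  gcongr with k
  calc _ ≤ √((Y * E)ᵀ k ⬝ᵥ (Y * E)ᵀ k) * √(Eᵀ k ⬝ᵥ Eᵀ k) := hG _ _
    _ = √(hY.eigenvalues k) := by
      rw [hcol, hdiag, hcol, hE, diagonal_apply_eq, one_apply_eq, Real.sqrt_one, mul_one]

end NuclearNorm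

section PartialIsometry

variable {m n k l r : Type*} [Fintype m] [Fintype n] [Fintype k] [Fintype l] [Fintype r]

lemma dotProduct_self_vecMul_submatrix_le [DecidableEq m] (U : Matrix m k ℝ) (hU : U * Uᵀ = 1)
    (e : r ↪ k) (p : m → ℝ) :
    (p ᵥ* U.submatrix id e) ⬝ᵥ (p ᵥ* U.submatrix id e) ≤ p ⬝ᵥ p := by
  have hisometry : (p ᵥ* U) ⬝ᵥ (p ᵥ* U) = p ⬝ᵥ p := by
    rw [← dotProduct_mulVec, ← mulVec_transpose, mulVec_mulVec, hU, one_mulVec]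
  calc (p ᵥ* U.submatrix id e) ⬝ᵥ (p ᵥ* U.submatrix id e)
      = ∑ c ∈ Finset.univ.map e, (p ᵥ* U) c * (p ᵥ* U) c := (Finset.sum_map _ e fun c => (p ᵥ* U) c * (p ᵥ* U) c).symm
    _ ≤ ∑ c, (p ᵥ* U) c * (p ᵥ* U) c :=
      Finset.sum_le_univ_sum_of_nonneg fun c => mul_self_nonneg _
    _ = p ⬝ᵥ p := hisometry

lemma dotProduct_submatrix_mul_transpose_mulVec_le [DecidableEq m] [DecidableEq n]
    (U : Matrix m k ℝ) (V : Matrix n l ℝ) (hU : U * Uᵀ = 1) (hV : V * Vᵀ = 1)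
    (e : r ↪ k) (f : r ↪ l) (p : m → ℝ) (q : n → ℝ) :
    p ⬝ᵥ (U.submatrix id e * (V.submatrix id f)ᵀ) *ᵥ q ≤ √(p ⬝ᵥ p) * √(q ⬝ᵥ q) := by
  rw [← mulVec_mulVec, dotProduct_mulVec, mulVec_transpose]
  calc (p ᵥ* U.submatrix id e) ⬝ᵥ (q ᵥ* V.submatrix id f)
      ≤ √((p ᵥ* U.submatrix id e) ⬝ᵥ (p ᵥ* U.submatrix id e)) *
          √((q ᵥ* V.submatrix id f) ⬝ᵥ (q ᵥ* V.submatrix id f)) := by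
        simpa [dotProduct, sq] using Real.sum_mul_le_sqrt_mul_sqrt Finset.univ _ _
    _ ≤ √(p ⬝ᵥ p) * √(q ⬝ᵥ q) := by
        gcongr
        · exact dotProduct_self_vecMul_submatrix_le U hU e p
        · exact dotProduct_self_vecMul_submatrix_le V hV f q

lemma trace_submatrix_mul_transpose_transpose_mul [DecidableEq k] [DecidableEq l]
    (U : Matrix m k ℝ) (V : Matrix n l ℝ) (S : Matrix k l ℝ) (hU : Uᵀ * U = 1) (hV : Vᵀ * V = 1)
    (e : r → k) (f : r → l) :
    trace ((U.submatrix id e * (V.submatrix id f)ᵀ)ᵀ * (U * S * Vᵀ)) = ∑ i, S (e i) (f i) := by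
  have hUe : (U.submatrix id e)ᵀ * U = (1 : Matrix k k ℝ).submatrix e id := by
    rw [← hU, transpose_submatrix, submatrix_mul _ _ e id id Function.bijective_id,
      submatrix_id_id]
  have hVf : Vᵀ * V.submatrix id f = (1 : Matrix l l ℝ).submatrix id f := by
    rw [← hV, submatrix_mul _ _ id id f Function.bijective_id, submatrix_id_id]
  calc trace ((U.submatrix id e * (V.submatrix id f)ᵀ)ᵀ * (U * S * Vᵀ))
      = trace (((U.submatrix id e)ᵀ * U) * S * (Vᵀ * V.submatrix id f)) := by
        rw [transpose_mul, transpose_transpose, Matrix.mul_assoc, trace_mul_comm]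
        simp only [Matrix.mul_assoc]
    _ = ∑ i, S (e i) (f i) := by
        rw [hUe, hVf]
        simp [trace, mul_apply, one_apply]

end PartialIsometry

section RectangularDiagonal

def diagEntries {R : Type*} [Zero R] {m n : ℕ} (S : Matrix (Fin m) (Fin n) R) (j : Fin n) : R :=
  if h : (j : ℕ) < m then S ⟨j, h⟩ j else 0

lemma transpose_mul_self_eq_diagonal_diagEntries {R : Type*} [CommSemiring R] {m n : ℕ}
    (S : Matrix (Fin m) (Fin n) R) (hS : ∀ (i : Fin m) (j : Fin n), (i : ℕ) ≠ j → S i j = 0) :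
    Sᵀ * S = diagonal (diagEntries S ^ 2) := by
  ext j k
  rw [mul_apply, diagonal_apply]
  split_ifs with hjk
  · subst hjk
    by_cases hj : (j : ℕ) < m
    · rw [Finset.sum_eq_single ⟨j, hj⟩ (fun i _ hi => by
        rw [transpose_apply, hS i j (fun h => hi (Fin.ext h)), zero_mul]) (by simp)]
      simp [diagEntries, hj, sq]
    · rw [Finset.sum_eq_zero fun i _ => by
        rw [transpose_apply, hS i j (fun h => hj (h ▸ i.2)), zero_mul]]
      simp [diagEntries, hj]
  · refine Finset.sum_eq_zero fun i _ => ?_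
    by_cases hij : (i : ℕ) = j
    · rw [hS i k (fun h => hjk (Fin.ext (hij ▸ h))), mul_zero]
    · rw [transpose_apply, hS i j hij, zero_mul]

lemma sum_diagEntries_eq_sum_castLE {R : Type*} [AddCommMonoid R] {m n r : ℕ}
    (S : Matrix (Fin m) (Fin n) R) (hrm : r ≤ m) (hrn : r ≤ n)
    (hr : ∀ (i : Fin m) (hi : (i : ℕ) < n), S i ⟨i, hi⟩ ≠ 0 → (i : ℕ) < r) :
    ∑ j, diagEntries S j = ∑ l : Fin r, S (Fin.castLE hrm l) (Fin.castLE hrn l) := by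
  have hzero : ∀ j : Fin n, j ∉ Finset.univ.map (Fin.castLEEmb hrn) → diagEntries S j = 0 := by
    intro j hj
    unfold diagEntries
    split_ifs with hjm
    · by_contra hne
      exact hj (Finset.mem_map.mpr ⟨⟨j, hr ⟨j, hjm⟩ j.2 hne⟩, Finset.mem_univ _, rfl⟩)
    · rfl
  rw [← Finset.sum_subset (Finset.subset_univ _) fun j _ hj => hzero j hj, Finset.sum_map]
  refine Finset.sum_congr rfl fun l _ => ?_
  simp only [diagEntries, Fin.castLEEmb_apply, Fin.val_castLE, dif_pos (l.2.trans_le hrm)]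
  rfl

lemma nuclearNorm_mul_mul_transpose_eq_sum_diagEntries {m n : ℕ} {U : Matrix (Fin m) (Fin m) ℝ}
    {V : Matrix (Fin n) (Fin n) ℝ} {S : Matrix (Fin m) (Fin n) ℝ} (hU : Uᵀ * U = 1)
    (hV : Vᵀ * V = 1) (hS : ∀ (i : Fin m) (j : Fin n), (i : ℕ) ≠ j → S i j = 0)
    (hS0 : ∀ i j, 0 ≤ S i j) :
    nuclearNorm (U * S * Vᵀ) = ∑ j, diagEntries S j := by
  refine nuclearNorm_eq_sum_of_transpose_mul_self_eq V hV _ (fun j => ?_) ?_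
  · unfold diagEntries
    split_ifs
    exacts [hS0 _ _, le_rfl]
  · calc (U * S * Vᵀ)ᵀ * (U * S * Vᵀ) = V * (Sᵀ * (Uᵀ * U) * S) * Vᵀ := by
          simp only [transpose_mul, transpose_transpose, Matrix.mul_assoc]
      _ = V * diagonal (diagEntries S ^ 2) * Vᵀ := by
          rw [hU, Matrix.mul_one, transpose_mul_self_eq_diagonal_diagEntries S hS]

end RectangularDiagonal

theorem nuclearNorm_subgradient_general {m n r : ℕ}
    (X : Matrix (Fin m) (Fin n) ℝ)
    (U : Matrix (Fin m) (Fin m) ℝ) (V : Matrix (Fin n) (Fin n) ℝ)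
    (S : Matrix (Fin m) (Fin n) ℝ)
    (hU : Uᵀ * U = 1 ∧ U * Uᵀ = 1)
    (hV : Vᵀ * V = 1 ∧ V * Vᵀ = 1)
    (hSdiag : ∀ (i : Fin m) (j : Fin n), (i : ℕ) ≠ (j : ℕ) → S i j = 0)
    (hSnonneg : ∀ (i : Fin m) (j : Fin n), 0 ≤ S i j)
    (hX : X = U * S * Vᵀ)
    (hrm : r ≤ m) (hrn : r ≤ n)
    (hr : ∀ (i : Fin m) (hi : (i : ℕ) < n), S i ⟨(i : ℕ), hi⟩ ≠ 0 ↔ (i : ℕ) < r) :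
    ∀ Y : Matrix (Fin m) (Fin n) ℝ,
      nuclearNorm X +
        Matrix.trace
          ((Matrix.of fun (i : Fin m) (j : Fin n) =>
              ∑ l : Fin r, U i (Fin.castLE hrm l) * V j (Fin.castLE hrn l))ᵀ * (Y - X)) ≤
      nuclearNorm Y := by
  intro Y
  have hG : (Matrix.of fun (i : Fin m) (j : Fin n) =>
      ∑ l : Fin r, U i (Fin.castLE hrm l) * V j (Fin.castLE hrn l)) =
      U.submatrix id (Fin.castLEEmb hrm) * (V.submatrix id (Fin.castLEEmb hrn))ᵀ := rfl
  have hGX : trace ((U.submatrix id (Fin.castLEEmb hrm) *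
      (V.submatrix id (Fin.castLEEmb hrn))ᵀ)ᵀ * X) = nuclearNorm X := by
    rw [hX, trace_submatrix_mul_transpose_transpose_mul U V S hU.1 hV.1,
      nuclearNorm_mul_mul_transpose_eq_sum_diagEntries hU.1 hV.1 hSdiag hSnonneg,
      sum_diagEntries_eq_sum_castLE S hrm hrn fun i hi => (hr i hi).mp]
    rfl
  have hGY := trace_transpose_mul_le_nuclearNorm _ Y
    (dotProduct_submatrix_mul_transpose_mulVec_le U V hU.2 hV.2 (Fin.castLEEmb hrm)
      (Fin.castLEEmb hrn))
  rw [hG, Matrix.mul_sub, trace_sub, hGX]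
  linarith

/-- Subgradient of the nuclear norm: if `X = U S Vᵀ` is a singular value decomposition
(`U`, `V` orthogonal, `S` diagonal with nonnegative nonincreasing diagonal), `r` is the
number of nonzero singular values, and `Ũ`, `Ṽ` consist of the first `r` columns of `U`
and `V`, then `Ũ Ṽᵀ` is a subgradient of the nuclear norm at `X`:
`‖Y‖₊ ≥ ‖X‖₊ + ⟨Ũ Ṽᵀ, Y - X⟩` for all `Y`, where `⟨A, B⟩ = trace (Aᵀ B)`. -/
theorem nuclearNorm_subgradient {m n r : ℕ}
    (X : Matrix (Fin m) (Fin n) ℝ)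
    (U : Matrix (Fin m) (Fin m) ℝ) (V : Matrix (Fin n) (Fin n) ℝ)
    (S : Matrix (Fin m) (Fin n) ℝ)
    (hU : Uᵀ * U = 1 ∧ U * Uᵀ = 1)
    (hV : Vᵀ * V = 1 ∧ V * Vᵀ = 1)
    (hSdiag : ∀ (i : Fin m) (j : Fin n), (i : ℕ) ≠ (j : ℕ) → S i j = 0)
    (hSnonneg : ∀ (i : Fin m) (j : Fin n), 0 ≤ S i j)
    (hSorder : ∀ (i j : Fin m) (hi : (i : ℕ) < n) (hj : (j : ℕ) < n),
      i ≤ j → S j ⟨(j : ℕ), hj⟩ ≤ S i ⟨(i : ℕ), hi⟩)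
    (hX : X = U * S * Vᵀ)
    (hrm : r ≤ m) (hrn : r ≤ n)
    (hr : ∀ (i : Fin m) (hi : (i : ℕ) < n), S i ⟨(i : ℕ), hi⟩ ≠ 0 ↔ (i : ℕ) < r) :
    ∀ Y : Matrix (Fin m) (Fin n) ℝ,
      nuclearNorm X +
        Matrix.trace
          ((Matrix.of fun (i : Fin m) (j : Fin n) =>
              ∑ l : Fin r, U i (Fin.castLE hrm l) * V j (Fin.castLE hrn l))ᵀ * (Y - X)) ≤
      nuclearNorm Y :=
  nuclearNorm_subgradient_general X U V S hU hV hSdiag hSnonneg hX hrm hrn hr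
end
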